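/- Let d : ℝ → ℝ satisfy the Leibniz rule d(xy) = x·d(y) + y·d(x) for all x, y ∈ ℝ, and assume that d(sin x) = cos(x)·d(x) holds for all x ∈ ℝ. Then d is additive, i.e., d(x+y) = d(x) + d(y) for all x, y ∈ ℝ, and hence d is a standard derivation. -/

import Mathlib

/-!
The sine rule at `π` gives `d π = 0`, and at `x + π` it gives `d (x + π) = d x`
whenever `cos x ≠ 0`. For `t ≠ 0` put `x = π s / t`, so that `x t = π s` and
`(x + π) t = π (s + t)`; expanding both products by Leibniz and subtracting yields
`π d (s + t) = π (d s + d t)`. The excluded case `cos (π s / t) = 0` is handled by swapping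
`s` and `t`: `2 s / t` and `2 t / s` cannot both be odd integers, as their product is `4`.
-/

open Real

def IsLeibniz {R : Type*} [Mul R] [Add R] (d : R → R) : Prop :=
  ∀ x y, d (x * y) = x * d y + y * d x

namespace IsLeibniz

section CommRing

variable {R : Type*} [CommRing R] {d : R → R}

theorem map_zero (hd : IsLeibniz d) : d 0 = 0 := by
  simpa using hd 0 0

theorem map_one (hd : IsLeibniz d) : d 1 = 0 := by
  simpa using hd 1 1

theorem map_mul_of_map_eq_zero (hd : IsLeibniz d) {c : R} (hc : d c = 0) (x : R) :
    d (c * x) = c * d x := by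
  rw [hd, hc, mul_zero, add_zero]

theorem map_neg [NoZeroDivisors R] [NeZero (2 : R)] (hd : IsLeibniz d) (x : R) :
    d (-x) = -d x := by
  have hneg_one : d (-1) = 0 := by
    have h := hd (-1) (-1)
    rw [neg_one_mul, neg_neg, map_one hd] at h
    have h2 : (2 : R) * d (-1) = 0 := by linear_combination h
    exact (mul_eq_zero.mp h2).resolve_left two_ne_zero
  simpa using map_mul_of_map_eq_zero hd hneg_one x

end CommRing

section Sine

variable {d : ℝ → ℝ}

theorem map_pi (hd : IsLeibniz d) (hsin : ∀ x, d (sin x) = cos x * d x) : d π = 0 := by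
  have h := hsin π
  rw [sin_pi, cos_pi, map_zero hd] at h
  linarith

theorem map_add_pi (hd : IsLeibniz d) (hsin : ∀ x, d (sin x) = cos x * d x) {x : ℝ}
    (hx : cos x ≠ 0) : d (x + π) = d x := by
  have h := hsin (x + π)
  rw [sin_add_pi, cos_add_pi, map_neg hd, hsin x] at h
  exact mul_left_cancel₀ hx (by linear_combination h)

theorem map_add_of_cos_ne_zero (hd : IsLeibniz d) (hsin : ∀ x, d (sin x) = cos x * d x)
    {s t : ℝ} (ht : t ≠ 0) (hc : cos (π * (s / t)) ≠ 0) : d (s + t) = d s + d t := by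
  set x := π * (s / t)
  have hxt : x * t = π * s := by rw [mul_assoc, div_mul_cancel₀ s ht]
  have hxπt : (x + π) * t = π * (s + t) := by linear_combination hxt
  have hdπ := map_pi hd hsin
  have h₁ : π * d (s + t) = (x + π) * d t + t * d x := by
    rw [← map_mul_of_map_eq_zero hd hdπ, ← hxπt, hd, map_add_pi hd hsin hc]
  have h₂ : π * d s = x * d t + t * d x := by
    rw [← map_mul_of_map_eq_zero hd hdπ, ← hxt, hd]
  exact mul_left_cancel₀ pi_ne_zero (by linear_combination h₁ - h₂)

end Sine

end IsLeibniz

theorem Real.cos_pi_mul_ne_zero_or_cos_pi_mul_inv_ne_zero (u : ℝ) :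
    cos (π * u) ≠ 0 ∨ cos (π * u⁻¹) ≠ 0 := by
  by_contra! h
  obtain ⟨⟨k, hk⟩, ⟨m, hm⟩⟩ := And.imp cos_eq_zero_iff.mp cos_eq_zero_iff.mp h
  have hu : u ≠ 0 := by
    rintro rfl
    simp at h
  have hk' : 2 * u = 2 * k + 1 := by
    apply mul_left_cancel₀ pi_ne_zero; linear_combination 2 * hk
  have hm' : 2 * u⁻¹ = 2 * m + 1 := by
    apply mul_left_cancel₀ pi_ne_zero; linear_combination 2 * hm
  have hprod : ((2 * k + 1) * (2 * m + 1) : ℤ) = 4 := by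
    have : (2 * u) * (2 * u⁻¹) = 4 := by field_simp; norm_num
    rw [hk', hm'] at this
    exact_mod_cast this
  have hodd : Odd ((2 * k + 1) * (2 * m + 1)) :=
    (odd_two_mul_add_one k).mul (odd_two_mul_add_one m)
  rw [hprod] at hodd
  exact absurd hodd (by decide)

/-- If `d : ℝ → ℝ` satisfies the Leibniz rule and is a derivation with respect to the sine
function, then `d` is additive, hence a standard derivation. -/
theorem additive_of_leibniz_of_sin
    (d : ℝ → ℝ) (hleib : ∀ x y : ℝ, d (x * y) = x * d y + y * d x)
    (hsin : ∀ x : ℝ, d (Real.sin x) = Real.cos x * d x) :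
    ∀ x y : ℝ, d (x + y) = d x + d y := by
  have hd : IsLeibniz d := hleib
  intro x y
  rcases eq_or_ne y 0 with rfl | hy
  · simp [hd.map_zero]
  rcases eq_or_ne x 0 with rfl | hx
  · simp [hd.map_zero]
  rcases cos_pi_mul_ne_zero_or_cos_pi_mul_inv_ne_zero (x / y) with hc | hc
  · exact hd.map_add_of_cos_ne_zero hsin hy hc
  · rw [inv_div] at hc
    rw [add_comm, add_comm (d x)]
    exact hd.map_add_of_cos_ne_zero hsin hx hc
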